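/- Let (a_n)_{n=1}^∞ be a sequence of scalars with L := Σ_{n=1}^∞ |a_n|² (log₂(n+1))² < ∞, and let (φ_n)_{n=1}^∞ be an orthonormal system in L₂(X, dμ; H) with fixed strongly measurable representatives. For each integer k ≥ 1 set S_k°(x) := max_{2^k ≤ j < 2^{k+1}} ‖Σ_{n=2^k}^j a_n φ_n(x)‖_H. Then Σ_{k=1}^∞ ∫_X (S_k°(x))² dμ(x) ≤ 4L, and consequently S_k°(x) → 0 as k → ∞ for μ-almost every x ∈ X. -/

import Mathlib

/-!
Rademacher–Menshov chaining. On a block `[s, s + 2^m)`, the binary expansion of the length of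
an initial segment writes it as a disjoint union of at most one dyadic block of each length
`2^i`, `i ≤ m`. By Cauchy–Schwarz the square of the largest partial sum is therefore at most
`m + 1` times the sum of the squares of all dyadic block sums, and by orthonormality each of the
`m + 1` levels of dyadic blocks integrates to `∑ |a_n|²` over the block. This gives
`(m + 1)² ∑ |a_n|²`, and on `[2^(k+1), 2^(k+2))` we have `(k + 2)² ≤ 4 (log₂ (n + 1))²`.
Summability of `∑_k ∫ (S_k°)²` then forces `S_k° → 0` almost everywhere.
-/

open MeasureTheory Filter
open Finset
open scoped ENNReal

def dyadicFloor (t i : ℕ) : ℕ := t / 2 ^ i * 2 ^ i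

def dyadicBlock (s i u : ℕ) : Finset ℕ :=
  Ico (s + u * 2 ^ i) (s + (u + 1) * 2 ^ i)

theorem sum_range_sum_dyadicBlock {M : Type*} [AddCommMonoid M] (f : ℕ → M) (s i U : ℕ) :
    ∑ u ∈ range U, ∑ n ∈ dyadicBlock s i u, f n = ∑ n ∈ Ico s (s + U * 2 ^ i), f n := by
  induction U with
  | zero => simp
  | succ U ih =>
    rw [sum_range_succ, ih, dyadicBlock]
    exact sum_Ico_consecutive f (Nat.le_add_right _ _) (by gcongr; omega)

theorem dyadicBlock_subset_Ico {s i u U : ℕ} (hu : u < U) :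
    dyadicBlock s i u ⊆ Ico s (s + U * 2 ^ i) :=
  Ico_subset_Ico (Nat.le_add_right _ _) (by gcongr; omega)

theorem dyadicFloor_succ (t i : ℕ) : dyadicFloor t (i + 1) = t / 2 ^ i / 2 * 2 * 2 ^ i := by
  rw [dyadicFloor, pow_succ, ← Nat.div_div_eq_div_mul]
  ring

theorem dyadicFloor_succ_le (t i : ℕ) : dyadicFloor t (i + 1) ≤ dyadicFloor t i := by
  rw [dyadicFloor_succ]
  exact Nat.mul_le_mul_right _ (Nat.div_mul_le_self _ 2)

theorem dyadicFloor_eq_zero {t m : ℕ} (ht : t ≤ 2 ^ m) : dyadicFloor t (m + 1) = 0 := by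
  rw [dyadicFloor, Nat.div_eq_of_lt (ht.trans_lt (Nat.pow_lt_pow_succ one_lt_two)), zero_mul]

theorem sum_Ico_eq_sum_range_dyadicFloor {G : Type*} [AddCommGroup G] (f : ℕ → G) (s : ℕ)
    {t m : ℕ} (ht : t ≤ 2 ^ m) :
    ∑ n ∈ Ico s (s + t), f n = ∑ i ∈ range (m + 1),
      ∑ n ∈ Ico (s + dyadicFloor t (i + 1)) (s + dyadicFloor t i), f n := by
  set P : ℕ → G := fun i => ∑ n ∈ range (s + dyadicFloor t i), f n
  calc ∑ n ∈ Ico s (s + t), f n = P 0 - P (m + 1) := by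
        have h0 : dyadicFloor t 0 = t := by simp [dyadicFloor]
        simp only [P, h0, dyadicFloor_eq_zero ht, add_zero, sum_Ico_eq_sub f (Nat.le_add_right s t)]
    _ = _ := by
        rw [← sum_range_sub']
        exact sum_congr rfl fun i _ =>
          (sum_Ico_eq_sub f (Nat.add_le_add_left (dyadicFloor_succ_le t i) s)).symm

-- Which of the two cases occurs is decided by the `i`-th binary digit of `t`.
theorem Ico_dyadicFloor_eq (s : ℕ) {t m i : ℕ} (ht : t ≤ 2 ^ m) (hi : i ≤ m) :
    Ico (s + dyadicFloor t (i + 1)) (s + dyadicFloor t i) = ∅ ∨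
      ∃ u < 2 ^ (m - i),
        Ico (s + dyadicFloor t (i + 1)) (s + dyadicFloor t i) = dyadicBlock s i u := by
  rw [dyadicFloor_succ, dyadicFloor]
  set q := t / 2 ^ i with hq
  rcases Nat.even_or_odd q with hev | hodd
  · left
    rw [Nat.div_mul_cancel hev.two_dvd, Ico_self]
  · right
    have hq_le : q ≤ 2 ^ (m - i) := by
      rw [hq, ← Nat.pow_div hi two_pos]
      exact Nat.div_le_div_right ht
    have hq_pos := hodd.pos
    have hq_mod := Nat.odd_iff.mp hodd
    refine ⟨q - 1, by omega, ?_⟩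
    rw [dyadicBlock, Nat.sub_add_cancel hq_pos]
    congr 3
    omega

theorem nnnorm_sum_Ico_sq_le {E : Type*} [SeminormedAddCommGroup E] (f : ℕ → E) (s : ℕ) {t m : ℕ}
    (ht : t ≤ 2 ^ m) :
    ‖∑ n ∈ Ico s (s + t), f n‖₊ ^ 2 ≤ (m + 1) * ∑ i ∈ range (m + 1),
      ∑ u ∈ range (2 ^ (m - i)), ‖∑ n ∈ dyadicBlock s i u, f n‖₊ ^ 2 := by
  calc ‖∑ n ∈ Ico s (s + t), f n‖₊ ^ 2
      ≤ (∑ i ∈ range (m + 1),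
          ‖∑ n ∈ Ico (s + dyadicFloor t (i + 1)) (s + dyadicFloor t i), f n‖₊) ^ 2 := by
        rw [sum_Ico_eq_sum_range_dyadicFloor f s ht]
        gcongr
        exact nnnorm_sum_le _ _
    _ ≤ (m + 1) * ∑ i ∈ range (m + 1),
          ‖∑ n ∈ Ico (s + dyadicFloor t (i + 1)) (s + dyadicFloor t i), f n‖₊ ^ 2 := by
        refine sq_sum_le_card_mul_sum_sq.trans_eq ?_
        simp
    _ ≤ _ := by
        gcongr with i hi
        rcases Ico_dyadicFloor_eq s ht (Nat.lt_succ_iff.mp (mem_range.mp hi))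
          with hempty | ⟨u, hu, hblock⟩
        · simp [hempty]
        · rw [hblock]
          exact single_le_sum (f := fun u => ‖∑ n ∈ dyadicBlock s i u, f n‖₊ ^ 2)
            (fun _ _ => zero_le) (mem_range.mpr hu)

theorem iSup_enorm_sum_Icc_sq_le {E : Type*} [SeminormedAddCommGroup E] (f : ℕ → E) (s m : ℕ) :
    (⨆ j ∈ Icc s (s + 2 ^ m - 1), ‖∑ n ∈ Icc s j, f n‖ₑ) ^ 2
      ≤ (m + 1) * ∑ i ∈ range (m + 1),
        ∑ u ∈ range (2 ^ (m - i)), ‖∑ n ∈ dyadicBlock s i u, f n‖ₑ ^ 2 := by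
  simp only [ENNReal.iSup_pow_of_ne_zero two_ne_zero]
  refine iSup₂_le fun j hj => ?_
  obtain ⟨hsj, hj⟩ := mem_Icc.mp hj
  have hpow := Nat.one_le_two_pow (n := m)
  have key := nnnorm_sum_Ico_sq_le f s (t := j + 1 - s) (m := m) (by omega)
  rw [show s + (j + 1 - s) = j + 1 by omega, Ico_add_one_right_eq_Icc] at key
  simp only [enorm_eq_nnnorm]
  exact_mod_cast key

theorem add_one_le_two_mul_logb {m n : ℕ} (hm : 1 ≤ m) (hn : 2 ^ m ≤ n) :
    (m : ℝ) + 1 ≤ 2 * Real.logb 2 (n + 1) := by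
  have hlog : (m : ℝ) ≤ Real.logb 2 (n + 1) := by
    rw [Real.le_logb_iff_rpow_le one_lt_two (by positivity), Real.rpow_natCast]
    exact_mod_cast hn.trans n.le_succ
  have : (1 : ℝ) ≤ m := by exact_mod_cast hm
  linarith

theorem sq_add_one_mul_enorm_sq_le {𝕜 : Type*} [RCLike 𝕜] {m n : ℕ} (hm : 1 ≤ m) (hn : 2 ^ m ≤ n)
    (z : 𝕜) :
    ((m : ℝ≥0∞) + 1) ^ 2 * ‖z‖ₑ ^ 2 ≤ ENNReal.ofReal (4 * (‖z‖ ^ 2 * Real.logb 2 (n + 1) ^ 2)) := by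
  have hlhs : ((m : ℝ≥0∞) + 1) ^ 2 * ‖z‖ₑ ^ 2 = ENNReal.ofReal (((m : ℝ) + 1) ^ 2 * ‖z‖ ^ 2) := by
    rw [ENNReal.ofReal_mul (by positivity), ENNReal.ofReal_pow (by positivity),
      ENNReal.ofReal_pow (norm_nonneg _), ofReal_norm, ENNReal.ofReal_add (by positivity) zero_le_one,
      ENNReal.ofReal_natCast, ENNReal.ofReal_one]
  rw [hlhs]
  refine ENNReal.ofReal_le_ofReal ?_
  have h := pow_le_pow_left₀ (by positivity) (add_one_le_two_mul_logb hm hn) 2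
  nlinarith [sq_nonneg ‖z‖]

section
variable {X : Type*} [MeasurableSpace X] {μ : Measure X} {𝕜 : Type*} [RCLike 𝕜]
  {H : Type*} [NormedAddCommGroup H] [InnerProductSpace 𝕜 H] {ι : Type*} [DecidableEq ι]

theorem MeasureTheory.MemLp.integrable_inner {f g : X → H} (hf : MemLp f 2 μ) (hg : MemLp g 2 μ) :
    Integrable (fun x => (inner 𝕜 (f x) (g x) : 𝕜)) μ :=
  (L2.integrable_inner (𝕜 := 𝕜) (hf.toLp f) (hg.toLp g)).congr <| by
    filter_upwards [hf.coeFn_toLp, hg.coeFn_toLp] with x hfx hgx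
    rw [hfx, hgx]

theorem integral_inner_sum_smul_self (s : Finset ι) (c : ι → 𝕜) {ψ : ι → X → H}
    (hmem : ∀ n ∈ s, MemLp (ψ n) 2 μ)
    (horth : ∀ n ∈ s, ∀ n' ∈ s,
      ∫ x, (inner 𝕜 (ψ n x) (ψ n' x) : 𝕜) ∂μ = if n = n' then (1 : 𝕜) else 0) :
    ∫ x, (inner 𝕜 (∑ n ∈ s, c n • ψ n x) (∑ n ∈ s, c n • ψ n x) : 𝕜) ∂μ
      = ((∑ n ∈ s, ‖c n‖ ^ 2 : ℝ) : 𝕜) := by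
  have hint : ∀ n ∈ s, ∀ n' ∈ s,
      Integrable (fun x => starRingEnd 𝕜 (c n) * (c n' * inner 𝕜 (ψ n x) (ψ n' x))) μ :=
    fun n hn n' hn' => (((hmem n hn).integrable_inner (hmem n' hn')).const_mul _).const_mul _
  simp_rw [sum_inner, inner_sum, inner_smul_left, inner_smul_right]
  rw [integral_finsetSum _ fun n hn => integrable_finsetSum _ (hint n hn)]
  push_cast
  refine sum_congr rfl fun n hn => ?_
  simp_rw [integral_finsetSum _ (hint n hn), integral_const_mul]
  rw [sum_eq_single_of_mem n hn fun n' hn' hne => by simp [horth n hn n' hn', hne.symm],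
    horth n hn n hn, if_pos rfl, mul_one, RCLike.conj_mul]

theorem lintegral_enorm_sum_smul_sq (s : Finset ι) (c : ι → 𝕜) {ψ : ι → X → H}
    (hmem : ∀ n ∈ s, MemLp (ψ n) 2 μ)
    (horth : ∀ n ∈ s, ∀ n' ∈ s,
      ∫ x, (inner 𝕜 (ψ n x) (ψ n' x) : 𝕜) ∂μ = if n = n' then (1 : 𝕜) else 0) :
    ∫⁻ x, ‖∑ n ∈ s, c n • ψ n x‖ₑ ^ 2 ∂μ = ∑ n ∈ s, ‖c n‖ₑ ^ 2 := by
  have hg : MemLp (fun x => ∑ n ∈ s, c n • ψ n x) 2 μ :=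
    memLp_finsetSum s fun n hn => (hmem n hn).const_smul (c n)
  have hreal : ∫ x, ‖∑ n ∈ s, c n • ψ n x‖ ^ 2 ∂μ = ∑ n ∈ s, ‖c n‖ ^ 2 := by
    have h := integral_inner_sum_smul_self s c hmem horth
    simp_rw [inner_self_eq_norm_sq_to_K, ← RCLike.ofReal_pow, integral_ofReal] at h
    exact_mod_cast h
  simp_rw [← ofReal_norm, ← ENNReal.ofReal_pow (norm_nonneg _)]
  rw [← ENNReal.ofReal_sum_of_nonneg fun _ _ => by positivity, ← hreal,
    ofReal_integral_eq_lintegral_ofReal (hg.integrable_norm_pow two_ne_zero)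
      (ae_of_all _ fun _ => by positivity)]

theorem lintegral_iSup_enorm_sum_Icc_sq_le (c : ℕ → 𝕜) {ψ : ℕ → X → H} (s m : ℕ)
    (hmem : ∀ n ∈ Ico s (s + 2 ^ m), MemLp (ψ n) 2 μ)
    (horth : ∀ n ∈ Ico s (s + 2 ^ m), ∀ n' ∈ Ico s (s + 2 ^ m),
      ∫ x, (inner 𝕜 (ψ n x) (ψ n' x) : 𝕜) ∂μ = if n = n' then (1 : 𝕜) else 0) :
    ∫⁻ x, (⨆ j ∈ Icc s (s + 2 ^ m - 1), ‖∑ n ∈ Icc s j, c n • ψ n x‖ₑ) ^ 2 ∂μ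
      ≤ ((m : ℝ≥0∞) + 1) ^ 2 * ∑ n ∈ Ico s (s + 2 ^ m), ‖c n‖ₑ ^ 2 := by
  have hcover : ∀ i ∈ range (m + 1), 2 ^ (m - i) * 2 ^ i = 2 ^ m := fun i hi => by
    rw [← pow_add, Nat.sub_add_cancel (Nat.lt_succ_iff.mp (mem_range.mp hi))]
  have hsub : ∀ i ∈ range (m + 1), ∀ u ∈ range (2 ^ (m - i)),
      dyadicBlock s i u ⊆ Ico s (s + 2 ^ m) := fun i hi u hu =>
    hcover i hi ▸ dyadicBlock_subset_Ico (mem_range.mp hu)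
  have hmeas : ∀ i ∈ range (m + 1), ∀ u ∈ range (2 ^ (m - i)),
      AEMeasurable (fun x => ‖∑ n ∈ dyadicBlock s i u, c n • ψ n x‖ₑ ^ 2) μ :=
    fun i hi u hu => (aestronglyMeasurable_fun_sum _ fun n hn =>
      (hmem n (hsub i hi u hu hn)).1.const_smul (c n)).enorm.pow_const 2
  have hlevel : ∀ i ∈ range (m + 1), ∑ u ∈ range (2 ^ (m - i)),
      ∫⁻ x, ‖∑ n ∈ dyadicBlock s i u, c n • ψ n x‖ₑ ^ 2 ∂μ
        = ∑ n ∈ Ico s (s + 2 ^ m), ‖c n‖ₑ ^ 2 := fun i hi => by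
    rw [← hcover i hi, ← sum_range_sum_dyadicBlock]
    refine sum_congr rfl fun u hu => lintegral_enorm_sum_smul_sq _ c
      (fun n hn => hmem n (hsub i hi u hu hn))
      (fun n hn n' hn' => horth n (hsub i hi u hu hn) n' (hsub i hi u hu hn'))
  calc ∫⁻ x, (⨆ j ∈ Icc s (s + 2 ^ m - 1), ‖∑ n ∈ Icc s j, c n • ψ n x‖ₑ) ^ 2 ∂μ
      ≤ ∫⁻ x, (m + 1) * ∑ i ∈ range (m + 1), ∑ u ∈ range (2 ^ (m - i)),
          ‖∑ n ∈ dyadicBlock s i u, c n • ψ n x‖ₑ ^ 2 ∂μ :=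
        lintegral_mono fun x => iSup_enorm_sum_Icc_sq_le _ s m
    _ = (m + 1) * ∑ i ∈ range (m + 1), ∑ u ∈ range (2 ^ (m - i)),
          ∫⁻ x, ‖∑ n ∈ dyadicBlock s i u, c n • ψ n x‖ₑ ^ 2 ∂μ := by
        rw [lintegral_const_mul' _ _ (by finiteness), lintegral_finsetSum' _ fun i hi =>
          aemeasurable_fun_sum _ (hmeas i hi)]
        congr 1
        exact sum_congr rfl fun i hi => lintegral_finsetSum' _ (hmeas i hi)
    _ = ((m : ℝ≥0∞) + 1) ^ 2 * ∑ n ∈ Ico s (s + 2 ^ m), ‖c n‖ₑ ^ 2 := by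
        rw [sum_congr rfl hlevel, sum_const, card_range, nsmul_eq_mul]
        push_cast
        ring

theorem aemeasurable_biSup_enorm_sum_Icc (c : ℕ → 𝕜) {ψ : ℕ → X → H} (s e : ℕ)
    (hψ : ∀ n ∈ Icc s e, AEStronglyMeasurable (ψ n) μ) :
    AEMeasurable (fun x => ⨆ j ∈ Icc s e, ‖∑ n ∈ Icc s j, c n • ψ n x‖ₑ) μ :=
  AEMeasurable.biSup _ (countable_toSet _) fun _ hj =>
    (aestronglyMeasurable_fun_sum _ fun n hn =>
      (hψ n (Icc_subset_Icc_right (mem_Icc.mp hj).2 hn)).const_smul (c n)).enorm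


theorem lintegral_iSup_enorm_sum_Icc_two_pow_sq_le (c : ℕ → 𝕜) {ψ : ℕ → X → H} (k : ℕ)
    (hmem : ∀ n ∈ Ico (2 ^ (k + 1)) (2 ^ (k + 2)), MemLp (ψ n) 2 μ)
    (horth : ∀ n ∈ Ico (2 ^ (k + 1)) (2 ^ (k + 2)), ∀ n' ∈ Ico (2 ^ (k + 1)) (2 ^ (k + 2)),
      ∫ x, (inner 𝕜 (ψ n x) (ψ n' x) : 𝕜) ∂μ = if n = n' then (1 : 𝕜) else 0) :
    ∫⁻ x, (⨆ j ∈ Icc (2 ^ (k + 1)) (2 ^ (k + 2) - 1),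
        ‖∑ n ∈ Icc (2 ^ (k + 1)) j, c n • ψ n x‖ₑ) ^ 2 ∂μ
      ≤ ∑ n ∈ Ico (2 ^ (k + 1)) (2 ^ (k + 2)),
          ENNReal.ofReal (4 * (‖c n‖ ^ 2 * Real.logb 2 ((n : ℝ) + 1) ^ 2)) := by
  have hlen : 2 ^ (k + 1) + 2 ^ (k + 1) = 2 ^ (k + 2) := by ring
  have h := lintegral_iSup_enorm_sum_Icc_sq_le c (2 ^ (k + 1)) (k + 1) (by rwa [hlen])
    (by rwa [hlen])
  rw [hlen, mul_sum] at h
  exact h.trans (sum_le_sum fun n hn =>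
    sq_add_one_mul_enorm_sq_le (Nat.le_add_left 1 k) (mem_Ico.mp hn).1 (c n))

end

theorem ENNReal.tendsto_nhds_zero_of_tendsto_pow {α : Type*} {l : Filter α} {f : α → ℝ≥0∞} {p : ℕ}
    (hp : p ≠ 0) (h : Tendsto (fun k => f k ^ p) l (nhds 0)) : Tendsto f l (nhds 0) := by
  have := ((ENNReal.continuous_rpow_const (y := (p⁻¹ : ℝ))).tendsto 0).comp h
  rw [ENNReal.zero_rpow_of_pos (by positivity)] at this
  simpa only [Function.comp_def, ENNReal.pow_rpow_inv_natCast hp] using this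

theorem ae_tendsto_zero_of_tsum_lintegral_ne_top {X : Type*} [MeasurableSpace X] {μ : Measure X}
    {F : ℕ → X → ℝ≥0∞} (hF : ∀ k, AEMeasurable (F k) μ) (h : ∑' k, ∫⁻ x, F k x ∂μ ≠ ∞) :
    ∀ᵐ x ∂μ, Tendsto (fun k => F k x) atTop (nhds 0) := by
  rw [← lintegral_tsum hF] at h
  filter_upwards [ae_lt_top' (AEMeasurable.tsum hF) h] with x hx
  exact ENNReal.tendsto_atTop_zero_of_tsum_ne_top hx.ne

theorem sum_range_sum_Ico_two_pow {M : Type*} [AddCommMonoid M] (g : ℕ → M) (K : ℕ) :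
    ∑ k ∈ range K, ∑ n ∈ Ico (2 ^ (k + 1)) (2 ^ (k + 2)), g n
      = ∑ n ∈ Ico 2 (2 ^ (K + 1)), g n := by
  induction K with
  | zero => simp
  | succ K ih =>
    rw [sum_range_succ, ih]
    exact sum_Ico_consecutive g (Nat.le_self_pow (by omega) 2)
      (Nat.pow_le_pow_right two_pos (by omega))

theorem tsum_sum_Ico_two_pow_le (g : ℕ → ℝ≥0∞) :
    ∑' k, ∑ n ∈ Ico (2 ^ (k + 1)) (2 ^ (k + 2)), g n ≤ ∑' n, g (n + 1) := by
  rw [ENNReal.tsum_eq_iSup_nat]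
  refine iSup_le fun K => ?_
  calc ∑ k ∈ range K, ∑ n ∈ Ico (2 ^ (k + 1)) (2 ^ (k + 2)), g n
      = ∑ n ∈ Ico 2 (2 ^ (K + 1)), g n := sum_range_sum_Ico_two_pow g K
    _ ≤ ∑ n ∈ Ico 1 (2 ^ (K + 1)), g n :=
        sum_le_sum_of_subset (Ico_subset_Ico_left one_le_two)
    _ = ∑ n ∈ range (2 ^ (K + 1) - 1), g (n + 1) := by
        simp only [sum_Ico_eq_sum_range, add_comm 1]
    _ ≤ ∑' n, g (n + 1) := ENNReal.sum_le_tsum _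

theorem dyadic_oscillation_bound_general
    {X : Type*} [MeasurableSpace X] (μ : Measure X)
    {𝕜 : Type*} [RCLike 𝕜]
    {H : Type*} [NormedAddCommGroup H] [InnerProductSpace 𝕜 H]
    (a : ℕ → 𝕜) (φ : ℕ → X → H)
    (hmem : ∀ n, 1 ≤ n → MemLp (φ n) 2 μ)
    (horth : ∀ n m, 1 ≤ n → 1 ≤ m →
      ∫ x, (inner 𝕜 (φ n x) (φ m x) : 𝕜) ∂μ = if n = m then (1 : 𝕜) else 0)
    (hL : Summable fun n : ℕ => ‖a (n + 1)‖ ^ 2 * (Real.logb 2 ((n : ℝ) + 2)) ^ 2) :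
    (∑' k : ℕ, ∫⁻ x,
        (⨆ j ∈ Finset.Icc (2 ^ (k + 1)) (2 ^ (k + 2) - 1),
          (‖∑ n ∈ Finset.Icc (2 ^ (k + 1)) j, a n • φ n x‖₊ : ℝ≥0∞)) ^ 2 ∂μ)
      ≤ ENNReal.ofReal
          (4 * ∑' n : ℕ, ‖a (n + 1)‖ ^ 2 * (Real.logb 2 ((n : ℝ) + 2)) ^ 2) ∧
    ∀ᵐ x ∂μ, Tendsto (fun k : ℕ =>
        ⨆ j ∈ Finset.Icc (2 ^ k) (2 ^ (k + 1) - 1),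
          (‖∑ n ∈ Finset.Icc (2 ^ k) j, a n • φ n x‖₊ : ℝ≥0∞))
      atTop (nhds (0 : ℝ≥0∞)) := by
  set w : ℕ → ℝ≥0∞ := fun n => ENNReal.ofReal (4 * (‖a n‖ ^ 2 * Real.logb 2 ((n : ℝ) + 1) ^ 2))
  have hpos : ∀ {k n : ℕ}, 2 ^ k ≤ n → 1 ≤ n := Nat.one_le_two_pow.trans
  have hblock k := lintegral_iSup_enorm_sum_Icc_two_pow_sq_le a k
    (fun n hn => hmem n (hpos (mem_Ico.mp hn).1))
    (fun n hn n' hn' => horth n n' (hpos (mem_Ico.mp hn).1) (hpos (mem_Ico.mp hn').1))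
  have hweights : ∑' n, w (n + 1)
      = ENNReal.ofReal (4 * ∑' n : ℕ, ‖a (n + 1)‖ ^ 2 * (Real.logb 2 ((n : ℝ) + 2)) ^ 2) := by
    rw [← tsum_mul_left, ENNReal.ofReal_tsum_of_nonneg (fun n => by positivity) (hL.mul_left 4)]
    refine tsum_congr fun n => ?_
    simp only [w]
    push_cast
    ring_nf
  have hbound := (ENNReal.tsum_le_tsum hblock).trans ((tsum_sum_Ico_two_pow_le w).trans_eq hweights)
  refine ⟨hbound, ?_⟩
  have hmeas : ∀ k : ℕ, AEMeasurable (fun x => (⨆ j ∈ Icc (2 ^ (k + 1)) (2 ^ (k + 2) - 1),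
      (‖∑ n ∈ Icc (2 ^ (k + 1)) j, a n • φ n x‖₊ : ℝ≥0∞)) ^ 2) μ := fun k =>
    (aemeasurable_biSup_enorm_sum_Icc a _ _ fun n hn =>
      (hmem n (hpos (mem_Icc.mp hn).1)).1).pow_const 2
  filter_upwards [ae_tendsto_zero_of_tsum_lintegral_ne_top hmeas
    (ne_top_of_le_ne_top ENNReal.ofReal_ne_top hbound)] with x hx
  exact (tendsto_add_atTop_iff_nat 1).mp (ENNReal.tendsto_nhds_zero_of_tendsto_pow two_ne_zero hx)

/-- Bound on the dyadic oscillation maxima S_k° and their a.e. convergence to zero. -/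
theorem dyadic_oscillation_bound
    {X : Type*} [MeasurableSpace X] (μ : Measure X)
    {𝕜 : Type*} [RCLike 𝕜]
    {H : Type*} [NormedAddCommGroup H] [InnerProductSpace 𝕜 H] [CompleteSpace H]
    (a : ℕ → 𝕜) (φ : ℕ → X → H)
    (hmem : ∀ n, 1 ≤ n → MemLp (φ n) 2 μ)
    (horth : ∀ n m, 1 ≤ n → 1 ≤ m →
      ∫ x, (inner 𝕜 (φ n x) (φ m x) : 𝕜) ∂μ = if n = m then (1 : 𝕜) else 0)
    (hL : Summable fun n : ℕ => ‖a (n + 1)‖ ^ 2 * (Real.logb 2 ((n : ℝ) + 2)) ^ 2) :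
    (∑' k : ℕ, ∫⁻ x,
        (⨆ j ∈ Finset.Icc (2 ^ (k + 1)) (2 ^ (k + 2) - 1),
          (‖∑ n ∈ Finset.Icc (2 ^ (k + 1)) j, a n • φ n x‖₊ : ℝ≥0∞)) ^ 2 ∂μ)
      ≤ ENNReal.ofReal
          (4 * ∑' n : ℕ, ‖a (n + 1)‖ ^ 2 * (Real.logb 2 ((n : ℝ) + 2)) ^ 2) ∧
    ∀ᵐ x ∂μ, Tendsto (fun k : ℕ =>
        ⨆ j ∈ Finset.Icc (2 ^ k) (2 ^ (k + 1) - 1),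
          (‖∑ n ∈ Finset.Icc (2 ^ k) j, a n • φ n x‖₊ : ℝ≥0∞))
      atTop (nhds (0 : ℝ≥0∞)) :=
  dyadic_oscillation_bound_general μ a φ hmem horth hL
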